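/- arXiv:2307.13662 — 5 statements merged into one kernel-verified Lean document; each statement's English description precedes it below -/
import Mathlib

section
/- (Restricted Johnson bound.) Let q ≥ 2, and let n, d, w be positive integers with q·w² − 2(q−1)·n·w + n·d·(q−1) > 0. Then every code of length n over an alphabet of size q, all of whose codewords have weight exactly w and whose minimum distance is at least d, has size at most ⌊ n·d·(q−1) / (q·w² − 2(q−1)·n·w + n·d·(q−1)) ⌋. -/
/-!
Let `M = #C` and let `N i a` be the number of codewords with symbol `a` in coordinate `i`.
The ordered pairs of codewords agreeing in coordinate `i` number `∑ a, N i a ^ 2`, so the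
distance hypothesis gives `M (M - 1) d + ∑ i, ∑ a, N i a ^ 2 ≤ n M²`. Constant weight gives a
lower bound for the same sum: with `S i = M - N i z`, Cauchy–Schwarz over the `q - 1` nonzero
symbols gives `(q - 1) ∑ a, N i a ^ 2 ≥ (q - 1) N i z ^ 2 + S i ^ 2`, and Cauchy–Schwarz over
the coordinates, with `∑ i, S i = M w`, bounds `∑ i, N i z ^ 2` and `∑ i, S i ^ 2` below.
Comparing the two bounds and dividing by `M` leaves the Johnson inequality.
-/

open Finset

theorem card_mul_card_sub_one_mul_le_sum_sum {α : Type*} [DecidableEq α] (s : Finset α)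
    (f : α → α → ℕ) {d : ℕ} (hd : ∀ x ∈ s, ∀ y ∈ s, x ≠ y → d ≤ f x y) :
    #s * (#s - 1) * d ≤ ∑ x ∈ s, ∑ y ∈ s, f x y :=
  calc #s * (#s - 1) * d = #s.offDiag • d := by rw [offDiag_card, Nat.mul_sub_one, smul_eq_mul]
    _ ≤ ∑ p ∈ s.offDiag, f p.1 p.2 := card_nsmul_le_sum _ _ _ fun p hp => by
        obtain ⟨hx, hy, hne⟩ := mem_offDiag.1 hp
        exact hd _ hx _ hy hne
    _ ≤ ∑ p ∈ s ×ˢ s, f p.1 p.2 := sum_le_sum_of_subset fun p hp => by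
        obtain ⟨hx, hy, -⟩ := mem_offDiag.1 hp
        exact mem_product.2 ⟨hx, hy⟩
    _ = ∑ x ∈ s, ∑ y ∈ s, f x y := sum_product s s fun p => f p.1 p.2

theorem sq_add_sq_sum_erase_le {β : Type*} [Fintype β] [DecidableEq β] (f : β → ℝ)
    (z : β) :
    (Fintype.card β - 1) * f z ^ 2 + (∑ a ∈ univ.erase z, f a) ^ 2
      ≤ (Fintype.card β - 1) * ∑ a, f a ^ 2 := by
  have hcs := sq_sum_le_card_mul_sum_sq (s := univ.erase z) (f := f)
  rw [card_erase_of_mem (mem_univ z), card_univ,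
    Nat.cast_sub (Fintype.card_pos_iff.2 ⟨z⟩)] at hcs
  rw [← add_sum_erase univ (fun a => f a ^ 2) (mem_univ z)]
  push_cast at hcs
  linarith

section SymbolCount

variable {ι β : Type*} [DecidableEq β]

def symbolCount (C : Finset (ι → β)) (i : ι) (a : β) : ℕ := #{x ∈ C | x i = a}

variable (C : Finset (ι → β))

theorem sum_symbolCount [Fintype β] (i : ι) : ∑ a, symbolCount C i a = #C :=
  (card_eq_sum_card_fiberwise fun x _ => mem_univ (x i)).symm

theorem sum_symbolCount_erase [Fintype β] (i : ι) (z : β) :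
    ∑ a ∈ univ.erase z, symbolCount C i a = #{x ∈ C | x i ≠ z} := by
  have hsplit := add_sum_erase univ (symbolCount C i) (mem_univ z)
  have hcard := card_filter_add_card_filter_not (s := C) (fun x => x i = z)
  rw [sum_symbolCount] at hsplit
  simp only [symbolCount, ← ne_eq] at hsplit hcard ⊢
  omega

theorem sum_symbolCount_sq [Fintype β] (i : ι) :
    ∑ a, symbolCount C i a ^ 2 = ∑ x ∈ C, ∑ y ∈ C, if x i = y i then 1 else 0 := by
  have hrow : ∀ x ∈ C, ∑ y ∈ C, (if x i = y i then 1 else 0) = symbolCount C i (x i) := by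
    intro x _
    simp only [symbolCount, card_filter, eq_comm]
  rw [sum_congr rfl hrow, ← sum_fiberwise C (fun x => x i)]
  refine sum_congr rfl fun a _ => ?_
  rw [sum_congr rfl fun x hx => by rw [(mem_filter.1 hx).2], sum_const, smul_eq_mul, sq]
  rfl

variable [Fintype ι]

theorem sum_card_filter_ne_eq_card_mul {z : β} {w : ℕ}
    (hwt : ∀ x ∈ C, #{i | x i ≠ z} = w) :
    ∑ i, #{x ∈ C | x i ≠ z} = #C * w := by
  have := sum_card_bipartiteAbove_eq_sum_card_bipartiteBelow (s := C) (t := univ)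
    (r := fun x i => x i ≠ z)
  simp only [bipartiteAbove, bipartiteBelow] at this
  rw [← this, sum_congr rfl hwt, sum_const, smul_eq_mul]

theorem sum_sum_hammingDist_add_sum_sum_symbolCount_sq [Fintype β] :
    ∑ x ∈ C, ∑ y ∈ C, hammingDist x y + ∑ i, ∑ a, symbolCount C i a ^ 2
      = Fintype.card ι * #C ^ 2 := by
  have hdist : ∑ x ∈ C, ∑ y ∈ C, hammingDist x y
      = ∑ i, ∑ x ∈ C, ∑ y ∈ C, if x i = y i then 0 else 1 := by
    simp only [hammingDist, card_filter, ite_not]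
    exact (sum_congr rfl fun x _ => sum_comm).trans sum_comm
  have hcoord : ∀ i : ι, ∑ x ∈ C, ∑ y ∈ C, ((if x i = y i then 0 else 1)
      + if x i = y i then 1 else 0) = #C ^ 2 := by
    intro i
    simp only [apply_ite₂ (· + ·), zero_add, add_zero, ite_self, sum_const, smul_eq_mul,
      mul_one, sq]
  simp only [hdist, sum_symbolCount_sq, ← sum_add_distrib, hcoord, sum_const, card_univ,
    smul_eq_mul]

theorem card_mul_card_sub_one_mul_add_sum_sum_symbolCount_sq_le [Fintype β] {d : ℕ}
    (hdist : ∀ x ∈ C, ∀ y ∈ C, x ≠ y → d ≤ hammingDist x y) :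
    #C * (#C - 1) * d + ∑ i, ∑ a, symbolCount C i a ^ 2 ≤ Fintype.card ι * #C ^ 2 := by
  have hsum := card_mul_card_sub_one_mul_le_sum_sum C hammingDist hdist
  have hcount := sum_sum_hammingDist_add_sum_sum_symbolCount_sq C
  omega

theorem sum_sum_symbolCount_sq_lower_bound [Fintype β] {z : β} {w : ℕ}
    (hwt : ∀ x ∈ C, #{i | x i ≠ z} = w) :
    ((Fintype.card β : ℝ) - 1) * (#C * ((Fintype.card ι : ℝ) - w)) ^ 2 + (#C * w : ℝ) ^ 2
      ≤ Fintype.card ι * ((Fintype.card β : ℝ) - 1) *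
          ∑ i, ∑ a, (symbolCount C i a : ℝ) ^ 2 := by
  set Z : ι → ℝ := fun i => symbolCount C i z
  set S : ι → ℝ := fun i => #{x ∈ C | x i ≠ z}
  have hq : (0 : ℝ) ≤ Fintype.card β - 1 := by
    have : 1 ≤ Fintype.card β := Fintype.card_pos_iff.2 ⟨z⟩
    rw [sub_nonneg]; exact_mod_cast this
  have hS : ∑ i, S i = #C * w := by
    simp only [S]
    exact_mod_cast sum_card_filter_ne_eq_card_mul C hwt
  have hZS : ∀ i, Z i + S i = #C := fun i => by
    have := card_filter_add_card_filter_not (s := C) (fun x => x i = z)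
    simp only [Z, S, symbolCount]
    exact_mod_cast this
  have hZ : ∑ i, Z i = #C * (Fintype.card ι - w) := by
    have := sum_add_distrib (s := univ) (f := Z) (g := S)
    simp only [hZS, sum_const, card_univ, nsmul_eq_mul, hS] at this
    linarith
  have hcoord : ∀ i, (Fintype.card β - 1) * Z i ^ 2 + S i ^ 2
      ≤ (Fintype.card β - 1) * ∑ a, (symbolCount C i a : ℝ) ^ 2 := fun i => by
    have := sq_add_sq_sum_erase_le (fun a => (symbolCount C i a : ℝ)) z
    rwa [← Nat.cast_sum, sum_symbolCount_erase] at this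
  have hcsZ := sq_sum_le_card_mul_sum_sq (s := univ) (f := Z)
  have hcsS := sq_sum_le_card_mul_sum_sq (s := univ) (f := S)
  rw [hZ, card_univ] at hcsZ
  rw [hS, card_univ] at hcsS
  have hsum := sum_le_sum fun i (_ : i ∈ univ) => hcoord i
  rw [sum_add_distrib, ← mul_sum, ← mul_sum] at hsum
  calc _ ≤ (Fintype.card β - 1) * (Fintype.card ι * ∑ i, Z i ^ 2)
        + Fintype.card ι * ∑ i, S i ^ 2 := add_le_add (mul_le_mul_of_nonneg_left hcsZ hq) hcsS
    _ = Fintype.card ι * ((Fintype.card β - 1) * ∑ i, Z i ^ 2 + ∑ i, S i ^ 2) := by ring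
    _ ≤ _ := by
      rw [mul_assoc]
      exact mul_le_mul_of_nonneg_left hsum (Nat.cast_nonneg _)

end SymbolCount

theorem johnson_inequality_of_sum_sq_bounds {M n q d w T : ℝ} (hM : 0 < M) (hn : 0 ≤ n)
    (hq : 1 ≤ q) (hupper : M * (M - 1) * d + T ≤ n * M ^ 2)
    (hlower : (q - 1) * (M * (n - w)) ^ 2 + (M * w) ^ 2 ≤ n * (q - 1) * T) :
    M * (q * w ^ 2 + n * d * (q - 1) - 2 * (q - 1) * n * w) ≤ n * d * (q - 1) := by
  have hscaled := mul_le_mul_of_nonneg_left hupper (mul_nonneg hn (sub_nonneg.2 hq))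
  refine le_of_mul_le_mul_left ?_ hM
  nlinarith

theorem restricted_johnson_bound_general
    (q n d w : ℕ)
    (hpos : 2 * (q - 1) * n * w < q * w ^ 2 + n * d * (q - 1))
    (A : Type) [Fintype A] [DecidableEq A] (z : A) (hA : Fintype.card A = q)
    (C : Finset (Fin n → A))
    (hwt : ∀ x ∈ C, (Finset.univ.filter (fun i : Fin n => x i ≠ z)).card = w)
    (hdist : ∀ x ∈ C, ∀ y ∈ C, x ≠ y → d ≤ hammingDist x y) :
    C.card ≤ n * d * (q - 1) / (q * w ^ 2 + n * d * (q - 1) - 2 * (q - 1) * n * w) := by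
  rcases Nat.eq_zero_or_pos #C with hC | hC
  · simp [hC]
  have hq : 1 ≤ q := hA ▸ Fintype.card_pos_iff.2 ⟨z⟩
  have hupper :
      (#C : ℝ) * (#C - 1) * d + ∑ i, ∑ a, (symbolCount C i a : ℝ) ^ 2 ≤ n * #C ^ 2 := by
    have := card_mul_card_sub_one_mul_add_sum_sum_symbolCount_sq_le C hdist
    rw [Fintype.card_fin] at this
    rw [← Nat.cast_one, ← Nat.cast_sub hC]
    exact_mod_cast this
  have hlower := sum_sum_symbolCount_sq_lower_bound C hwt
  rw [Fintype.card_fin, hA] at hlower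
  have key := johnson_inequality_of_sum_sq_bounds (by exact_mod_cast hC) n.cast_nonneg
    (by exact_mod_cast hq) hupper hlower
  rw [Nat.le_div_iff_mul_le (Nat.sub_pos_of_lt hpos), ← Nat.cast_le (α := ℝ)]
  push_cast [Nat.cast_sub hpos.le, Nat.cast_sub hq]
  linarith

/-- **Restricted Johnson bound.** Let `q ≥ 2` and let `n, d, w` be positive
integers with `q·w² − 2(q−1)·n·w + n·d·(q−1) > 0` (stated additively to avoid truncated
subtraction).  Then every nonempty code of length `n` over an alphabet of size `q`
(with designated zero symbol `z`), all of whose codewords have weight exactly `w` and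
whose minimum distance is at least `d`, has size at most
`⌊ n·d·(q−1) / (q·w² − 2(q−1)·n·w + n·d·(q−1)) ⌋`. -/
theorem restricted_johnson_bound
    (q n d w : ℕ) (hq : 2 ≤ q) (hn : 0 < n) (hd : 0 < d) (hw : 0 < w)
    (hpos : 2 * (q - 1) * n * w < q * w ^ 2 + n * d * (q - 1))
    (A : Type) [Fintype A] [DecidableEq A] (z : A) (hA : Fintype.card A = q)
    (C : Finset (Fin n → A)) (hCne : C.Nonempty)
    (hwt : ∀ x ∈ C, (Finset.univ.filter (fun i : Fin n => x i ≠ z)).card = w)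
    (hdist : ∀ x ∈ C, ∀ y ∈ C, x ≠ y → d ≤ hammingDist x y) :
    C.card ≤ n * d * (q - 1) / (q * w ^ 2 + n * d * (q - 1) - 2 * (q - 1) * n * w) :=
  restricted_johnson_bound_general q n d w hpos A z hA C hwt hdist
end

section
/- (Unrestricted Johnson bound.) Let q ≥ 2 and let n ≥ 1, d, w ≥ 1 be integers. If M is an upper bound on the size of every code of length n−1 over an alphabet of size q with constant weight w−1 and minimum distance at least d, then every code of length n over an alphabet of size q with constant weight w and minimum distance at least d has size at most ⌊ (q−1)·n·M / w ⌋. -/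
/-- **Unrestricted Johnson bound.** Let `q ≥ 2`, `n ≥ 1`, `d ≥ 1`, `w ≥ 1`.
If `M` bounds the size of every nonempty code of length `n−1` over an alphabet of size
`q` with constant weight `w−1` and minimum distance at least `d`, then every nonempty
code of length `n` over that alphabet with constant weight `w` and minimum distance at
least `d` has size at most `⌊ (q−1)·n·M / w ⌋` (natural division is floor division). -/
theorem unrestricted_johnson_bound
    (q n d w M : ℕ) (hq : 2 ≤ q) (hn : 1 ≤ n) (hd : 1 ≤ d) (hw : 1 ≤ w)
    (A : Type) [Fintype A] [DecidableEq A] (z : A) (hA : Fintype.card A = q)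
    (hM : ∀ C' : Finset (Fin (n - 1) → A), C'.Nonempty →
      (∀ x ∈ C', (Finset.univ.filter (fun i : Fin (n - 1) => x i ≠ z)).card = w - 1) →
      (∀ x ∈ C', ∀ y ∈ C', x ≠ y → d ≤ hammingDist x y) →
      C'.card ≤ M)
    (C : Finset (Fin n → A)) (hCne : C.Nonempty)
    (hwt : ∀ x ∈ C, (Finset.univ.filter (fun i : Fin n => x i ≠ z)).card = w)
    (hdist : ∀ x ∈ C, ∀ y ∈ C, x ≠ y → d ≤ hammingDist x y) :
    C.card ≤ (q - 1) * n * M / w := by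
  obtain ⟨m, rfl⟩ : ∃ m, n = m + 1 := ⟨n - 1, by omega⟩
  classical
  -- each fiber, punctured at coordinate i, has size at most M
  have fiber : ∀ (i : Fin (m + 1)) (a : A), a ≠ z →
      (C.filter (fun x => x i = a)).card ≤ M := by
    intro i a ha
    set D := C.filter (fun x => x i = a) with hD
    rcases D.eq_empty_or_nonempty with h | h
    · simp [h]
    set P : (Fin (m + 1) → A) → (Fin m → A) := fun x j => x (i.succAbove j) with hP
    have hPinj : Set.InjOn P D := by
      intro x hx y hy hxy
      funext k
      rcases eq_or_ne k i with rfl | hk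
      · rw [(Finset.mem_filter.mp hx).2, (Finset.mem_filter.mp hy).2]
      · obtain ⟨j, rfl⟩ := Fin.exists_succAbove_eq hk
        exact congrFun hxy j
    have hcard : (D.image P).card = D.card := Finset.card_image_of_injOn hPinj
    have hwt' : ∀ y ∈ D.image P,
        (Finset.univ.filter (fun j : Fin m => y j ≠ z)).card = w - 1 := by
      intro y hy
      obtain ⟨x, hx, rfl⟩ := Finset.mem_image.mp hy
      have hxC : x ∈ C := (Finset.mem_filter.mp hx).1
      have hxa : x i = a := (Finset.mem_filter.mp hx).2
      have hi : i ∈ Finset.univ.filter (fun k : Fin (m + 1) => x k ≠ z) := by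
        simp [hxa, ha]
      have hbij : (Finset.univ.filter (fun j : Fin m => P x j ≠ z)).card =
          ((Finset.univ.filter (fun k : Fin (m + 1) => x k ≠ z)).erase i).card := by
        apply Finset.card_bij (fun j _ => i.succAbove j)
        · intro j hj
          simp only [Finset.mem_filter, Finset.mem_univ, true_and] at hj
          exact Finset.mem_erase.mpr ⟨i.succAbove_ne j, by simpa [hP] using hj⟩
        · intro j₁ _ j₂ _ hjj
          exact Fin.succAbove_right_injective hjj
        · intro k hk
          obtain ⟨hki, hkz⟩ := Finset.mem_erase.mp hk
          obtain ⟨j, rfl⟩ := Fin.exists_succAbove_eq hki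
          simp only [Finset.mem_filter, Finset.mem_univ, true_and] at hkz
          exact ⟨j, by simp [hP, hkz], rfl⟩
      rw [hbij, Finset.card_erase_of_mem hi, hwt x hxC]
    have hdist' : ∀ u ∈ D.image P, ∀ v ∈ D.image P, u ≠ v → d ≤ hammingDist u v := by
      intro u hu v hv huv
      obtain ⟨x, hx, rfl⟩ := Finset.mem_image.mp hu
      obtain ⟨y, hy, rfl⟩ := Finset.mem_image.mp hv
      have hxy : x ≠ y := fun hxy => huv (by rw [hxy])
      have hxi : x i = y i := by
        rw [(Finset.mem_filter.mp hx).2, (Finset.mem_filter.mp hy).2]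
      have heq : hammingDist (P x) (P y) = hammingDist x y := by
        unfold hammingDist
        apply Finset.card_bij (fun j _ => i.succAbove j)
        · intro j hj
          simp only [Finset.mem_filter, Finset.mem_univ, true_and] at hj ⊢
          exact hj
        · intro j₁ _ j₂ _ hjj
          exact Fin.succAbove_right_injective hjj
        · intro k hk
          simp only [Finset.mem_filter, Finset.mem_univ, true_and] at hk
          have hki : k ≠ i := fun h => hk (h ▸ hxi)
          obtain ⟨j, rfl⟩ := Fin.exists_succAbove_eq hki
          exact ⟨j, by simp [P, hk], rfl⟩
      rw [heq]
      exact hdist x (Finset.mem_filter.mp hx).1 y (Finset.mem_filter.mp hy).1 hxy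
    have := hM (D.image P) (h.image P) hwt' hdist'
    omega
  -- double counting
  have key : w * C.card ≤ (q - 1) * (m + 1) * M := by
    have step1 : w * C.card = ∑ i : Fin (m + 1), (C.filter (fun x => x i ≠ z)).card := by
      calc w * C.card = ∑ x ∈ C, (Finset.univ.filter (fun i : Fin (m + 1) => x i ≠ z)).card := by
            rw [Finset.sum_congr rfl hwt, Finset.sum_const, smul_eq_mul, mul_comm]
        _ = ∑ x ∈ C, ∑ i : Fin (m + 1), if x i ≠ z then 1 else 0 := by
            simp [Finset.card_filter]
        _ = ∑ i : Fin (m + 1), ∑ x ∈ C, if x i ≠ z then 1 else 0 := Finset.sum_comm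
        _ = ∑ i : Fin (m + 1), (C.filter (fun x => x i ≠ z)).card := by
            simp [Finset.card_filter]
    have step2 : ∀ i : Fin (m + 1),
        (C.filter (fun x => x i ≠ z)).card ≤ (q - 1) * M := by
      intro i
      have hsplit : (C.filter (fun x => x i ≠ z)).card =
          ∑ a ∈ Finset.univ.erase z, ((C.filter (fun x => x i ≠ z)).filter
            (fun x => x i = a)).card := by
        exact Finset.card_eq_sum_card_fiberwise (f := fun x : Fin (m + 1) → A => x i)
          (fun x hx => Finset.mem_erase.mpr ⟨(Finset.mem_filter.mp hx).2, Finset.mem_univ _⟩)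
      rw [hsplit]
      have hb : ∀ a ∈ Finset.univ.erase z,
          ((C.filter (fun x => x i ≠ z)).filter (fun x => x i = a)).card ≤ M := by
        intro a ha
        have haz : a ≠ z := (Finset.mem_erase.mp ha).1
        have : (C.filter (fun x => x i ≠ z)).filter (fun x => x i = a) =
            C.filter (fun x => x i = a) := by
          rw [Finset.filter_filter]
          apply Finset.filter_congr
          intro x _
          constructor
          · exact fun h => h.2
          · exact fun h => ⟨h ▸ haz, h⟩
        rw [this]
        exact fiber i a haz
      calc ∑ a ∈ Finset.univ.erase z, ((C.filter (fun x => x i ≠ z)).filter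
            (fun x => x i = a)).card ≤ ∑ _a ∈ Finset.univ.erase z, M :=
              Finset.sum_le_sum hb
        _ = (q - 1) * M := by
            rw [Finset.sum_const, smul_eq_mul,
              Finset.card_erase_of_mem (Finset.mem_univ z), Finset.card_univ, hA]
    calc w * C.card = ∑ i : Fin (m + 1), (C.filter (fun x => x i ≠ z)).card := step1
      _ ≤ ∑ _i : Fin (m + 1), (q - 1) * M := Finset.sum_le_sum (fun i _ => step2 i)
      _ = (m + 1) * ((q - 1) * M) := by
          rw [Finset.sum_const, smul_eq_mul, Finset.card_univ, Fintype.card_fin]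
      _ = (q - 1) * (m + 1) * M := by ring
  rw [Nat.le_div_iff_mul_le (by omega : 0 < w), mul_comm]
  exact key
end

section
/- Let q be an odd prime power and m > 1 an integer, and set n = (q^{m+1}−1)/(q−1). Then there exists a code of length n over the alphabet GF(q), of size q^{m+1}−1, with constant weight q^m, which is equidistant with common distance q^m; that is, every codeword has exactly q^m nonzero coordinates, and any two distinct codewords differ in exactly q^m coordinates. -/
open Finset Matrix

section Aux

variable {K : Type} [Field K] [Fintype K] [DecidableEq K] {d : ℕ}

private lemma aux_fiber_card [Fintype (Projectivization K (Fin d → K))]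
    [DecidableEq (Projectivization K (Fin d → K))]
    (p : Projectivization K (Fin d → K)) :
    (Finset.univ.filter (fun w : {w : Fin d → K // w ≠ 0} =>
        Projectivization.mk K w.1 w.2 = p)).card = Fintype.card K - 1 := by
  rw [← Fintype.card_subtype, ← Fintype.card_units (α := K)]
  refine Fintype.card_congr (Equiv.ofBijective (f := fun c : Kˣ =>
    (⟨⟨(c : K) • p.rep, smul_ne_zero c.ne_zero p.rep_nonzero⟩,
      ((Projectivization.mk_eq_mk_iff K _ _ _ p.rep_nonzero).2
        ⟨c, by rw [Units.smul_def]⟩).trans p.mk_rep⟩ :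
      {w : {w : Fin d → K // w ≠ 0} // Projectivization.mk K w.1 w.2 = p}))
    ⟨?_, ?_⟩).symm
  · intro c₁ c₂ h
    have h' : (c₁ : K) • p.rep = (c₂ : K) • p.rep :=
      congrArg (fun x => (x.1.1 : Fin d → K)) h
    exact Units.ext (smul_left_injective K p.rep_nonzero h')
  · rintro ⟨⟨w, hw⟩, hwp⟩
    have : Projectivization.mk K w hw = Projectivization.mk K p.rep p.rep_nonzero := by
      rw [p.mk_rep]; exact hwp
    obtain ⟨a, ha⟩ := (Projectivization.mk_eq_mk_iff K _ _ hw p.rep_nonzero).1 this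
    exact ⟨a, Subtype.ext (Subtype.ext (by simpa [Units.smul_def] using ha))⟩

private lemma aux_count_lines [Fintype (Projectivization K (Fin d → K))]
    [DecidableEq (Projectivization K (Fin d → K))]
    (Q : Projectivization K (Fin d → K) → Prop) [DecidablePred Q] :
    (Finset.univ.filter (fun w : {w : Fin d → K // w ≠ 0} =>
        Q (Projectivization.mk K w.1 w.2))).card
      = (Finset.univ.filter Q).card * (Fintype.card K - 1) := by
  rw [Finset.card_eq_sum_card_fiberwise
    (f := fun w : {w : Fin d → K // w ≠ 0} => Projectivization.mk K w.1 w.2)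
    (t := Finset.univ.filter Q) (fun w hw => by
      simp only [mem_coe, mem_filter, mem_univ, true_and] at hw ⊢; exact hw)]
  rw [Finset.sum_congr rfl (fun p hp => ?_), Finset.sum_const, smul_eq_mul]
  have hQp : Q p := by simpa using hp
  rw [Finset.filter_filter]
  rw [show (Finset.univ.filter (fun w : {w : Fin d → K // w ≠ 0} =>
      Q (Projectivization.mk K w.1 w.2) ∧ Projectivization.mk K w.1 w.2 = p))
      = Finset.univ.filter (fun w : {w : Fin d → K // w ≠ 0} =>
        Projectivization.mk K w.1 w.2 = p) from ?_]
  · exact aux_fiber_card p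
  · ext w
    simp only [mem_filter, mem_univ, true_and]
    constructor
    · exact fun h => h.2
    · intro h; exact ⟨h ▸ hQp, h⟩

/-- The kernel of a nonzero dot-product functional has index `card K`. -/
private lemma aux_card_ker (v : Fin d → K) (hv : v ≠ 0) :
    (Finset.univ.filter (fun w : Fin d → K => v ⬝ᵥ w = 0)).card * Fintype.card K
      = Fintype.card K ^ d := by
  set ℓ : (Fin d → K) →ₗ[K] K :=
    { toFun := fun w => v ⬝ᵥ w
      map_add' := fun x y => dotProduct_add v x y
      map_smul' := fun c x => by simp [dotProduct_smul, smul_eq_mul] } with hℓ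
  have hsurj : Function.Surjective ℓ := by
    obtain ⟨i, hi0⟩ := Function.ne_iff.1 hv
    have hi : v i ≠ 0 := by simpa using hi0
    intro c
    refine ⟨Pi.single i ((v i)⁻¹ * c), ?_⟩
    simp only [hℓ, LinearMap.coe_mk, AddHom.coe_mk, dotProduct_single]
    field_simp
  have h1 : Nat.card (Fin d → K) = Nat.card (LinearMap.ker ℓ)
      * Nat.card ((Fin d → K) ⧸ LinearMap.ker ℓ) :=
    Submodule.card_eq_card_quotient_mul_card _
  have h2 : Nat.card ((Fin d → K) ⧸ LinearMap.ker ℓ) = Nat.card K :=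
    Nat.card_congr (ℓ.quotKerEquivOfSurjective hsurj).toEquiv
  have h3 : Nat.card (LinearMap.ker ℓ)
      = (Finset.univ.filter (fun w : Fin d → K => v ⬝ᵥ w = 0)).card := by
    have he := Nat.card_congr (Equiv.subtypeEquivRight
      (p := fun w => w ∈ LinearMap.ker ℓ) (q := fun w : Fin d → K => v ⬝ᵥ w = 0)
      (fun w => by simp [LinearMap.mem_ker, hℓ]))
    rw [he, Nat.card_eq_fintype_card, Fintype.card_subtype]
  have h4 : Nat.card (Fin d → K) = Fintype.card K ^ d := by
    simp [Nat.card_eq_fintype_card]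
  rw [h2, h3, h4, Nat.card_eq_fintype_card] at h1
  exact h1.symm

end Aux

/-- Let `q` be an odd prime power, `m > 1`, and `n = (q^{m+1}−1)/(q−1)`.
Then there is a code of length `n` over the alphabet `GF(q)`, of size `q^{m+1}−1`, with
constant weight `q^m`, which is equidistant with common distance `q^m`: every codeword
has exactly `q^m` nonzero coordinates, and any two distinct codewords differ in exactly
`q^m` coordinates. -/
theorem optimal_equidistant_code
    (q m n : ℕ) (hq : IsPrimePow q) (hodd : Odd q) (hm : 1 < m)
    (hn : n = (q ^ (m + 1) - 1) / (q - 1))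
    (K : Type) [Field K] [Fintype K] [DecidableEq K] (hK : Fintype.card K = q) :
    ∃ C : Finset (Fin n → K), C.Nonempty ∧ C.card = q ^ (m + 1) - 1 ∧
      (∀ x ∈ C, (Finset.univ.filter (fun i : Fin n => x i ≠ 0)).card = q ^ m) ∧
      (∀ x ∈ C, ∀ y ∈ C, x ≠ y → hammingDist x y = q ^ m) := by
  classical
  have hq2 : 2 ≤ q := hq.two_le
  set V := (Fin (m + 1) → K) with hV
  haveI : Finite (Projectivization K V) := Quotient.finite _
  haveI := Fintype.ofFinite (Projectivization K V)
  -- cardinality of nonzero vectors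
  have hcardV : Fintype.card V = q ^ (m + 1) := by simp [hV, hK]
  have hcard0 : Fintype.card {w : V // w ≠ 0} = q ^ (m + 1) - 1 := by
    rw [Fintype.card_subtype_compl (p := fun w : V => w = 0)]
    simp [hcardV, Fintype.card_subtype_eq (0 : V)]
  -- total count of projective points
  have htot : Fintype.card (Projectivization K V) * (q - 1) = q ^ (m + 1) - 1 := by
    have := aux_count_lines (K := K) (d := m + 1) (fun _ => True)
    simpa [Finset.filter_true, hK, hcard0] using this.symm
  have hcardP : Fintype.card (Projectivization K V) = n := by
    rw [hn, ← htot, Nat.mul_div_cancel _ (by omega)]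
  set e : Fin n ≃ Projectivization K V := (Fintype.equivFinOfCardEq hcardP).symm with he
  -- codewords
  set c : V → (Fin n → K) := fun v i => v ⬝ᵥ (e i).rep with hc
  -- weight of each codeword
  have hwt : ∀ v : V, v ≠ 0 →
      (Finset.univ.filter (fun i : Fin n => c v i ≠ 0)).card = q ^ m := by
    intro v hv
    have hstepA : (Finset.univ.filter (fun i : Fin n => c v i ≠ 0)).card
        = (Finset.univ.filter (fun p : Projectivization K V => v ⬝ᵥ p.rep ≠ 0)).card := by
      apply Finset.card_bij (fun i _ => e i)
      · intro i hi; simp only [mem_filter, mem_univ, true_and] at hi ⊢; exact hi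
      · intro i _ j _ h; exact e.injective h
      · intro p hp
        refine ⟨e.symm p, ?_, by simp⟩
        simp only [mem_filter, mem_univ, true_and, hc] at hp ⊢
        simpa using hp
    have hstepB : (Finset.univ.filter (fun w : {w : V // w ≠ 0} => v ⬝ᵥ w.1 ≠ 0)).card
        = (Finset.univ.filter (fun p : Projectivization K V => v ⬝ᵥ p.rep ≠ 0)).card
          * (q - 1) := by
      rw [← hK]
      rw [← aux_count_lines (K := K) (d := m + 1)
        (fun p : Projectivization K V => v ⬝ᵥ p.rep ≠ 0)]
      congr 1
      apply Finset.filter_congr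
      intro w _
      obtain ⟨a, ha⟩ := Projectivization.exists_smul_eq_mk_rep K w.1 w.2
      have : v ⬝ᵥ (Projectivization.mk K w.1 w.2).rep = (a : K) * (v ⬝ᵥ w.1) := by
        rw [← ha, Units.smul_def, dotProduct_smul, smul_eq_mul]
      have ha0 : (a : K) ≠ 0 := a.ne_zero
      simp only [this, ne_eq, mul_eq_zero, not_or, eq_iff_iff]
      tauto
    have hstepC : (Finset.univ.filter (fun w : {w : V // w ≠ 0} => v ⬝ᵥ w.1 ≠ 0)).card
        = (Finset.univ.filter (fun w : V => v ⬝ᵥ w ≠ 0)).card := by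
      rw [← Fintype.card_subtype, ← Fintype.card_subtype]
      apply Fintype.card_congr
      refine ⟨fun x => ⟨x.1.1, x.2⟩, fun y => ⟨⟨y.1, fun h => y.2 (by rw [h]; simp)⟩, y.2⟩,
        fun x => by ext : 2 <;> rfl, fun y => rfl⟩
    have hker : (Finset.univ.filter (fun w : V => v ⬝ᵥ w = 0)).card = q ^ m := by
      have h := aux_card_ker v hv
      rw [hK] at h
      have : (Finset.univ.filter (fun w : V => v ⬝ᵥ w = 0)).card * q = q ^ m * q := by
        rw [h]; ring
      exact Nat.eq_of_mul_eq_mul_right (by omega) this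
    have hne : (Finset.univ.filter (fun w : V => v ⬝ᵥ w ≠ 0)).card
        = q ^ (m + 1) - q ^ m := by
      have hsd : Finset.univ.filter (fun w : V => v ⬝ᵥ w ≠ 0)
          = Finset.univ \ Finset.univ.filter (fun w : V => v ⬝ᵥ w = 0) := by
        ext w; simp
      rw [hsd, Finset.card_sdiff_of_subset (Finset.filter_subset _ _), Finset.card_univ, hcardV, hker]
    have hqm : q ^ (m + 1) - q ^ m = q ^ m * (q - 1) := by
      rw [Nat.mul_sub, mul_one, ← pow_succ]
    have hfinal : (Finset.univ.filter
          (fun p : Projectivization K V => v ⬝ᵥ p.rep ≠ 0)).card * (q - 1)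
        = q ^ m * (q - 1) := by
      rw [← hstepB, hstepC, hne, hqm]
    rw [hstepA]
    exact Nat.eq_of_mul_eq_mul_right (by omega) hfinal
  -- injectivity of the encoding
  have hinj : ∀ v : V, v ≠ 0 → ∀ u : V, u ≠ 0 → c v = c u → v = u := by
    intro v hv u hu hcv
    have hP : ∀ p : Projectivization K V, v ⬝ᵥ p.rep = u ⬝ᵥ p.rep := by
      intro p
      have := congrFun hcv (e.symm p)
      simpa [hc] using this
    have hall : ∀ w : V, v ⬝ᵥ w = u ⬝ᵥ w := by
      intro w
      by_cases hw : w = 0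
      · simp [hw]
      · obtain ⟨a, ha⟩ := Projectivization.exists_smul_eq_mk_rep K w hw
        have h := hP (Projectivization.mk K w hw)
        rw [← ha, Units.smul_def, dotProduct_smul, dotProduct_smul] at h
        have h' : (a : K) * (v ⬝ᵥ w) = (a : K) * (u ⬝ᵥ w) := by
          simpa [smul_eq_mul] using h
        exact mul_left_cancel₀ a.ne_zero h' 
    funext i
    have := hall (Pi.single i 1)
    simpa [dotProduct_single] using this
  -- the code
  refine ⟨(Finset.univ.filter (fun v : V => v ≠ 0)).image c, ?_, ?_, ?_, ?_⟩
  · obtain ⟨v, hv⟩ := exists_ne (0 : V)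
    exact ⟨c v, Finset.mem_image.2 ⟨v, by simp [hv], rfl⟩⟩
  · rw [Finset.card_image_of_injOn (fun v hv u hu h =>
      hinj v (by simpa using hv) u (by simpa using hu) h)]
    rw [← hcard0, ← Fintype.card_subtype]
  · intro x hx
    obtain ⟨v, hv, rfl⟩ := Finset.mem_image.1 hx
    exact hwt v (by simpa using hv)
  · intro x hx y hy hxy
    obtain ⟨v, hv, rfl⟩ := Finset.mem_image.1 hx
    obtain ⟨u, hu, rfl⟩ := Finset.mem_image.1 hy
    have hvu : v - u ≠ 0 := by
      intro h
      exact hxy (by rw [sub_eq_zero] at h; rw [h])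
    have := hwt (v - u) hvu
    rw [hammingDist]
    rw [← this]
    congr 1
    apply Finset.filter_congr
    intro i _
    simp only [hc]
    rw [sub_dotProduct]
    simp [sub_ne_zero]
end

section
/- Let C be a finite group of order g not containing the symbol 0, and let W be a balanced generalized weighing matrix BGW(v,k,λ;C). For c ∈ C and a row index i, let c·W_i denote the word of length v obtained from the i-th row of W by multiplying every nonzero entry on the left by c (zeros stay zero). Then for all c, c' ∈ C and row indices i, j: if i = j and c ≠ c', the Hamming distance between c·W_i and c'·W_j equals k; and if i ≠ j, the Hamming distance between c·W_i and c'·W_j equals 2k − λ − λ/g = 2k − (g+1)λ/g. -/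
/-- A balanced generalized weighing matrix `BGW(v, k, λ; G)`: a `v × v` matrix with
entries in `G ∪ {0}` (modelled as `Option G`, with `none` playing the role of `0`) such
that every row has exactly `k` nonzero entries and, for all distinct rows `i ≠ j`, the
multiset `{W_{iℓ}·W_{jℓ}⁻¹ : W_{iℓ} ≠ 0, W_{jℓ} ≠ 0}` contains exactly `λ/|G|` copies of
each element of `G` (in particular `|G|` divides `λ`). -/
def IsBGW {G : Type*} [Group G] [Fintype G] [DecidableEq G] {v : ℕ}
    (W : Fin v → Fin v → Option G) (k lam : ℕ) : Prop :=
  (∀ i : Fin v, (Finset.univ.filter (fun ℓ : Fin v => W i ℓ ≠ none)).card = k) ∧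
  Fintype.card G ∣ lam ∧
  (∀ i j : Fin v, i ≠ j → ∀ g : G,
    (Finset.univ.filter (fun ℓ : Fin v =>
        ∃ a b : G, W i ℓ = some a ∧ W j ℓ = some b ∧ a * b⁻¹ = g)).card
      = lam / Fintype.card G)

/-- Let `C` be a finite group of order `g` and `W` a `BGW(v,k,λ;C)`.
For `c ∈ C`, let `c·W_i` be the `i`-th row of `W` with every nonzero entry multiplied on
the left by `c` (zeros stay zero).  Then for `c, c' ∈ C` and rows `i, j`: if `i = j` and
`c ≠ c'` the Hamming distance between `c·W_i` and `c'·W_j` is `k`; and if `i ≠ j` it is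
`2k − λ − λ/g`. -/
theorem bgw_scaled_row_distances
    {C : Type} [Group C] [Fintype C] [DecidableEq C]
    {v k lam : ℕ} (W : Fin v → Fin v → Option C)
    (hW : IsBGW W k lam) (c c' : C) (i j : Fin v) :
    (i = j → c ≠ c' →
      hammingDist (fun ℓ : Fin v => (W i ℓ).map (fun a => c * a))
        (fun ℓ : Fin v => (W j ℓ).map (fun a => c' * a)) = k) ∧
    (i ≠ j →
      hammingDist (fun ℓ : Fin v => (W i ℓ).map (fun a => c * a))
        (fun ℓ : Fin v => (W j ℓ).map (fun a => c' * a))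
        = 2 * k - lam - lam / Fintype.card C) := by
  obtain ⟨hrow, hdvd, hbal⟩ := hW
  constructor
  · rintro rfl hcc'
    rw [hammingDist, ← hrow i]
    congr 1
    ext ℓ
    simp only [Finset.mem_filter, Finset.mem_univ, true_and]
    cases h : W i ℓ with
    | none => simp [h]
    | some a =>
      simp only [h, Option.map_some, ne_eq, Option.some.injEq]
      exact ⟨fun _ h' => (nomatch h'), fun _ hc => hcc' (mul_right_cancel hc)⟩
  · intro hij
    set n := Fintype.card C with hn
    set A := Finset.univ.filter (fun ℓ : Fin v => W i ℓ ≠ none) with hA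
    set B := Finset.univ.filter (fun ℓ : Fin v => W j ℓ ≠ none) with hB
    set E := fun g : C => Finset.univ.filter (fun ℓ : Fin v =>
        ∃ a b : C, W i ℓ = some a ∧ W j ℓ = some b ∧ a * b⁻¹ = g) with hEdef
    have hE : ∀ g, (E g).card = lam / n := fun g => hbal i j hij g
    have hEsub : ∀ g, E g ⊆ A ∩ B := by
      intro g ℓ hℓ
      simp only [hEdef, Finset.mem_filter, Finset.mem_univ, true_and] at hℓ
      obtain ⟨a, b, ha, hb, _⟩ := hℓ
      simp [hA, hB, Finset.mem_inter, ha, hb]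
    have hAB : (A ∩ B).card = lam := by
      rw [Finset.card_eq_sum_card_fiberwise (s := A ∩ B)
        (t := (Finset.univ : Finset C))
        (f := fun ℓ => ((W i ℓ).getD 1) * ((W j ℓ).getD 1)⁻¹)
        (fun x _ => Finset.mem_univ _)]
      have hfib : ∀ g : C, ((A ∩ B).filter
          (fun ℓ => ((W i ℓ).getD 1) * ((W j ℓ).getD 1)⁻¹ = g)) = E g := by
        intro g
        ext ℓ
        simp only [hEdef, hA, hB, Finset.mem_filter, Finset.mem_inter,
          Finset.mem_univ, true_and, ne_eq]
        constructor
        · rintro ⟨⟨hi, hj⟩, heq⟩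
          obtain ⟨a, ha⟩ := Option.ne_none_iff_exists'.mp hi
          obtain ⟨b, hb⟩ := Option.ne_none_iff_exists'.mp hj
          refine ⟨a, b, ha, hb, ?_⟩
          simpa [ha, hb] using heq
        · rintro ⟨a, b, ha, hb, heq⟩
          refine ⟨⟨by simp [ha], by simp [hb]⟩, by simpa [ha, hb] using heq⟩
      simp_rw [hfib, hE]
      rw [Finset.sum_const, Finset.card_univ, smul_eq_mul, ← hn]
      exact Nat.mul_div_cancel' hdvd
    have hset : (Finset.univ.filter (fun ℓ : Fin v =>
        (fun ℓ : Fin v => (W i ℓ).map (fun a => c * a)) ℓ ≠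
        (fun ℓ : Fin v => (W j ℓ).map (fun a => c' * a)) ℓ))
        = (A ∪ B) \ E (c⁻¹ * c') := by
      ext ℓ
      simp only [hA, hB, hEdef, Finset.mem_sdiff, Finset.mem_union,
        Finset.mem_filter, Finset.mem_univ, true_and, ne_eq]
      cases hi : W i ℓ with
      | none =>
        cases hj : W j ℓ with
        | none => simp
        | some b => simp
      | some a =>
        cases hj : W j ℓ with
        | none => simp
        | some b =>
          simp only [Option.map_some, Option.some.injEq, not_false_eq_true,
            true_or, true_and, Option.some.injEq]
          constructor
          · intro hne
            refine ⟨Or.inl (fun h' => (nomatch h')), ?_⟩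
            rintro ⟨a', b', rfl, rfl, heq⟩
            apply hne
            have h2 := congrArg (fun x => c * x * b) heq
            simpa [mul_assoc] using h2
          · rintro ⟨-, hne⟩ heq
            exact hne ⟨a, b, rfl, rfl, by
              have h2 := congrArg (fun x => c⁻¹ * x * b⁻¹) heq
              simpa [mul_assoc] using h2⟩
    have hsub : E (c⁻¹ * c') ⊆ A ∪ B :=
      (hEsub _).trans (Finset.inter_subset_left.trans Finset.subset_union_left)
    have hunion : (A ∪ B).card + (A ∩ B).card = A.card + B.card :=
      Finset.card_union_add_card_inter A B
    have hAk : A.card = k := hrow i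
    have hBk : B.card = k := hrow j
    have hlamk : lam ≤ k := by
      rw [← hAB, ← hAk]; exact Finset.card_le_card Finset.inter_subset_left
    have hEle : lam / n ≤ lam := by
      rw [← hE (c⁻¹ * c'), ← hAB]; exact Finset.card_le_card (hEsub _)
    rw [hammingDist, hset, Finset.card_sdiff_of_subset hsub, hE]
    omega
end

section
/- Let q be a prime power, let g be a divisor of q−1, and let m > 1 be an integer. Set v = (q^{m+1}−1)/(q−1) and N = g·v + 1. Then there exists a covering array CA_{g+1}(N, v, 2, 1): an N × v array with entries from an alphabet of size g+1 such that for every pair of distinct column indices j_1 ≠ j_2 and every ordered pair (a, b) of alphabet symbols, there is at least one row r with entry a in column j_1 and entry b in column j_2. -/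
open scoped Classical

namespace BGWAux

variable {K : Type*} [Field K]

def dot {n : ℕ} (x u : Fin n → K) : K := ∑ i, x i * u i

lemma dot_zero {n : ℕ} (u : Fin n → K) : dot (0 : Fin n → K) u = 0 := by simp [dot]

lemma dot_smul {n : ℕ} (c : K) (x u : Fin n → K) : dot (c • x) u = c * dot x u := by
  simp [dot, Finset.mul_sum, mul_assoc]

lemma dot_surj {n : ℕ} {w : Fin 2 → Fin n → K} (li : LinearIndependent K w) (y : Fin 2 → K) :
    ∃ x : Fin n → K, ∀ i, dot x (w i) = y i := by
  obtain ⟨f, hf⟩ := LinearMap.exists_extend ((Module.Basis.span li).constr K y)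
  have hfw : ∀ i, f (w i) = y i := by
    intro i
    have h2 : ((Module.Basis.span li i : _) : Fin n → K) = w i := congrArg Subtype.val (Module.Basis.span_apply li i)
    have h3 := congrArg (fun g : _ →ₗ[K] K => g (Module.Basis.span li i)) hf
    simp only [Module.Basis.constr_basis] at h3
    simpa [h2] using h3
  refine ⟨fun j => f (Pi.single j 1), fun i => ?_⟩
  have hj : ∀ j, f (Pi.single j 1) * w i j = f (Pi.single j (w i j)) := by
    intro j
    rw [mul_comm, ← smul_eq_mul, ← map_smul]
    congr 1
    ext k
    by_cases h : k = j <;> simp [Pi.single_apply, h]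
  calc dot (fun j => f (Pi.single j 1)) (w i) = ∑ j, f (Pi.single j (w i j)) := by
        simp [dot, hj]
    _ = f (∑ j, Pi.single j (w i j)) := (map_sum f _ _).symm
    _ = f (w i) := by rw [Finset.univ_sum_single]
    _ = y i := hfw i

def subRel {G : Type*} [Group G] (H : Subgroup G) (Y : Type*) [MulAction G Y] : Setoid Y where
  r x y := ∃ h ∈ H, h • x = y
  iseqv := by
    refine ⟨fun x => ⟨1, H.one_mem, one_smul _ _⟩, ?_, ?_⟩
    · rintro x y ⟨h, hm, rfl⟩
      exact ⟨h⁻¹, H.inv_mem hm, inv_smul_smul h x⟩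
    · rintro x y z ⟨h, hm, rfl⟩ ⟨h', hm', rfl⟩
      exact ⟨h' * h, H.mul_mem hm' hm, mul_smul h' h x⟩

lemma card_fibers {X Q G : Type*} [Fintype X] [Fintype Q] [Fintype G]
    (π : X → Q) (e : ∀ c : Q, G ≃ {x : X // π x = c}) :
    Fintype.card X = Fintype.card Q * Fintype.card G := by
  rw [Fintype.card_congr (Equiv.sigmaFiberEquiv π).symm, Fintype.card_sigma]
  have h : ∀ c : Q, Fintype.card {x : X // π x = c} = Fintype.card G := fun c =>
    (Fintype.card_congr (e c)).symm
  simp [h, Finset.sum_const, Finset.card_univ, mul_comm]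

lemma card_subRel {G : Type*} [Group G] (H : Subgroup G) (Y : Type*) [MulAction G Y]
    [Fintype Y] [Fintype H] [Fintype (Quotient (subRel H Y))]
    (free : ∀ (g : G) (y : Y), g • y = y → g = 1) :
    Fintype.card Y = Fintype.card (Quotient (subRel H Y)) * Fintype.card H := by
  refine card_fibers (Quotient.mk (subRel H Y)) fun c => ?_
  have hmem : ∀ h : H, Quotient.mk (subRel H Y) ((h : G) • c.out) = c := fun h =>
    (Quotient.sound (show (subRel H Y).r c.out ((h : G) • c.out) from ⟨h, h.2, rfl⟩)).symm.trans (Quotient.out_eq c)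
  refine Equiv.ofBijective (fun h : H => ⟨(h : G) • c.out, hmem h⟩) ⟨?_, ?_⟩
  · intro h h' hhh
    have h1 : (h : G) • c.out = (h' : G) • c.out := congrArg Subtype.val hhh
    have h3 : ((h' : G)⁻¹ * h) • c.out = c.out := by
      rw [mul_smul, h1, inv_smul_smul]
    have h4 := free _ _ h3
    exact Subtype.ext (inv_mul_eq_one.mp h4).symm
  · rintro ⟨x, hx⟩
    obtain ⟨h, hm, hh⟩ : ∃ h' ∈ H, h' • c.out = x :=
      Quotient.exact ((Quotient.out_eq c).trans hx.symm)
    exact ⟨⟨h, hm⟩, Subtype.ext hh⟩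

variable {K : Type*} [Field K]

instance nzAction {V : Type*} [AddCommGroup V] [Module K V] :
    MulAction Kˣ {v : V // v ≠ 0} where
  smul c v := ⟨(c : K) • v.1, smul_ne_zero c.ne_zero v.2⟩
  one_smul v := Subtype.ext (show ((1 : Kˣ) : K) • v.1 = v.1 by simp)
  mul_smul c d v := Subtype.ext
    (show ((c * d : Kˣ) : K) • v.1 = (c : K) • ((d : K) • v.1) by
      rw [Units.val_mul, mul_smul])

lemma nz_smul_coe {V : Type*} [AddCommGroup V] [Module K V] (c : Kˣ) (v : {v : V // v ≠ 0}) :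
    ((c • v : {v : V // v ≠ 0}) : V) = (c : K) • (v : V) := rfl

lemma free_nz {V : Type*} [AddCommGroup V] [Module K V] :
    ∀ (c : Kˣ) (v : {v : V // v ≠ 0}), c • v = v → c = 1 := by
  intro c v h
  have h1 : (c : K) • (v : V) = (1 : K) • (v : V) := by
    rw [one_smul]; exact congrArg Subtype.val h
  exact Units.ext (smul_left_injective K v.2 h1)



lemma main_aux (K : Type) [Field K] [Fintype K]
    (q g m v N : ℕ) (hcardK : Fintype.card K = q)
    (hg : g ∣ q - 1) (hg0 : 0 < g) (hm : 1 < m)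
    (hv : v = (q ^ (m + 1) - 1) / (q - 1)) (hN : N = g * v + 1) :
    ∃ M : Fin N → Fin v → Fin (g + 1),
      ∀ j₁ j₂ : Fin v, j₁ ≠ j₂ → ∀ a b : Fin (g + 1),
        ∃ r : Fin N, M r j₁ = a ∧ M r j₂ = b := by
  classical
  have hq2 : 2 ≤ q := by
    rw [← hcardK]
    exact Fintype.one_lt_card
  set n := m + 1 with hn
  have hcardW : Fintype.card (Fin n → K) = q ^ n := by
    rw [Fintype.card_fun, hcardK, Fintype.card_fin]
  have hcardX : Fintype.card {w : Fin n → K // w ≠ 0} = q ^ n - 1 := by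
    have h1 : Fintype.card {w : Fin n → K // ¬ (w = 0)} =
        Fintype.card (Fin n → K) - Fintype.card {w : Fin n → K // w = 0} :=
      Fintype.card_subtype_compl _
    rw [Fintype.card_subtype_eq (0 : Fin n → K), hcardW] at h1
    exact h1
  -- nonzero field elements
  set XK := {y : K // y ≠ 0} with hXK
  have hcardXK : Fintype.card XK = q - 1 := by
    have h1 : Fintype.card {y : K // ¬ (y = 0)} =
        Fintype.card K - Fintype.card {y : K // y = 0} :=
      Fintype.card_subtype_compl _
    rw [Fintype.card_subtype_eq (0 : K), hcardK] at h1
    exact h1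
  -- the subgroup H of index g in Kˣ
  obtain ⟨ζ, hζ⟩ := IsCyclic.exists_generator (α := Kˣ)
  have hcardU : Fintype.card Kˣ = q - 1 := by rw [Fintype.card_units, hcardK]
  have horder : orderOf ζ = q - 1 := by
    rw [orderOf_eq_card_of_forall_mem_zpowers hζ, Nat.card_eq_fintype_card, hcardU]
  set H : Subgroup Kˣ := Subgroup.zpowers (ζ ^ g) with hH
  set d := (q - 1) / g with hdd
  have hcardH : Fintype.card H = d := by
    rw [← Nat.card_eq_fintype_card, hH, Nat.card_zpowers, orderOf_pow, horder,
      Nat.gcd_comm, Nat.gcd_eq_left hg]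
  have hd : g * d = q - 1 := Nat.mul_div_cancel' hg
  have hd0 : 0 < d := by
    rcases Nat.eq_zero_or_pos d with h | h
    · rw [h, mul_zero] at hd; omega
    · exact h
  have hvd : (q - 1) ∣ q ^ n - 1 := by simpa using Nat.sub_dvd_pow_sub_pow q 1 n
  have hqv : (q - 1) * v = q ^ n - 1 := by rw [hv]; exact Nat.mul_div_cancel' hvd
  -- quotients and their cardinalities
  have freeX : ∀ (c : Kˣ) (y : {w : Fin n → K // w ≠ 0}), c • y = y → c = 1 := fun c y h => free_nz c y h
  have freeXK : ∀ (c : Kˣ) (y : XK), c • y = y → c = 1 := fun c y h => free_nz c y h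
  have hQP : Fintype.card (Quotient (subRel (⊤ : Subgroup Kˣ) {w : Fin n → K // w ≠ 0})) = v := by
    have h1 := card_subRel (⊤ : Subgroup Kˣ) {w : Fin n → K // w ≠ 0} freeX
    have h2 : Fintype.card (⊤ : Subgroup Kˣ) = q - 1 := by
      rw [← hcardU]; exact Fintype.card_congr Subgroup.topEquiv.toEquiv
    rw [hcardX, h2] at h1
    apply Nat.eq_of_mul_eq_mul_right (show 0 < q - 1 by omega)
    calc Fintype.card (Quotient (subRel (⊤ : Subgroup Kˣ) {w : Fin n → K // w ≠ 0})) * (q - 1)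
        = q ^ n - 1 := h1.symm
      _ = (q - 1) * v := hqv.symm
      _ = v * (q - 1) := mul_comm _ _
  have hQH : Fintype.card (Quotient (subRel H {w : Fin n → K // w ≠ 0})) = g * v := by
    have h1 := card_subRel H {w : Fin n → K // w ≠ 0} freeX
    rw [hcardX, hcardH] at h1
    apply Nat.eq_of_mul_eq_mul_right hd0
    calc Fintype.card (Quotient (subRel H {w : Fin n → K // w ≠ 0})) * d
        = q ^ n - 1 := h1.symm
      _ = (q - 1) * v := hqv.symm
      _ = (g * d) * v := by rw [hd]
      _ = (g * v) * d := by ring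
  have hQG : Fintype.card (Quotient (subRel H XK)) = g := by
    have h1 := card_subRel H XK freeXK
    rw [hcardXK, hcardH] at h1
    apply Nat.eq_of_mul_eq_mul_right hd0
    calc Fintype.card (Quotient (subRel H XK)) * d
        = q - 1 := h1.symm
      _ = g * d := hd.symm
  set eP := Fintype.equivFinOfCardEq hQP with heP
  set eH := Fintype.equivFinOfCardEq hQH with heH
  set eG := Fintype.equivFinOfCardEq hQG with heG
  -- the symbol map
  set φ : K → Fin (g + 1) := fun y =>
    if h : y = 0 then 0 else Fin.succ (eG (Quotient.mk (subRel H XK) ⟨y, h⟩)) with hφ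
  have φ0 : φ 0 = 0 := dif_pos rfl
  have φinv : ∀ h : Kˣ, h ∈ H → ∀ y : K, φ ((h : K) * y) = φ y := by
    intro h hm y
    by_cases hy : y = 0
    · rw [hy, mul_zero]
    · have hne : (h : K) * y ≠ 0 := mul_ne_zero h.ne_zero hy
      rw [hφ]
      simp only [dif_neg hne, dif_neg hy]
      congr 1
      congr 1
      refine (Quotient.sound (show (subRel H XK).r ⟨y, hy⟩ ⟨(h : K) * y, hne⟩ from
        ⟨h, hm, Subtype.ext rfl⟩)).symm
  have φsurj : ∀ a : Fin (g + 1), ∃ y : K, φ y = a := by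
    intro a
    induction a using Fin.cases with
    | zero => exact ⟨0, φ0⟩
    | succ i =>
      refine ⟨(((eG.symm i).out : XK) : K), ?_⟩
      rw [hφ]
      simp only [dif_neg ((eG.symm i).out.2)]
      have h1 : (⟨(((eG.symm i).out : XK) : K), (eG.symm i).out.2⟩ : XK) = (eG.symm i).out :=
        Subtype.ext rfl
      rw [h1, Quotient.out_eq, Equiv.apply_symm_apply]
  -- the rows
  set fRow : Fin N → (Fin n → K) := fun r =>
    if h : (r : ℕ) < g * v then (((eH.symm ⟨r, h⟩).out : {w : Fin n → K // w ≠ 0}) : Fin n → K) else 0 with hfRow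
  refine ⟨fun r j => φ (dot (fRow r) (((eP.symm j).out : {w : Fin n → K // w ≠ 0}) : Fin n → K)), ?_⟩
  intro j₁ j₂ hj a b
  obtain ⟨y₁, hy₁⟩ := φsurj a
  obtain ⟨y₂, hy₂⟩ := φsurj b
  set c₁ := eP.symm j₁ with hc₁
  set c₂ := eP.symm j₂ with hc₂
  have hc : c₁ ≠ c₂ := by
    intro h
    apply hj
    rw [← Equiv.apply_symm_apply eP j₁, ← Equiv.apply_symm_apply eP j₂, ← hc₁, ← hc₂, h]
  set u₁ := ((c₁.out : {w : Fin n → K // w ≠ 0}) : Fin n → K) with hu₁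
  set u₂ := ((c₂.out : {w : Fin n → K // w ≠ 0}) : Fin n → K) with hu₂
  have li : LinearIndependent K ![u₁, u₂] := by
    rw [linearIndependent_fin2]
    constructor
    · show u₂ ≠ 0
      exact (c₂.out).2
    · intro α hα
      simp only [Matrix.cons_val_one, Matrix.head_cons, Matrix.cons_val_zero] at hα
      have hα0 : α ≠ 0 := by
        rintro rfl
        rw [zero_smul] at hα
        exact (c₁.out).2 hα.symm
      apply hc
      have hrel : (subRel (⊤ : Subgroup Kˣ) {w : Fin n → K // w ≠ 0}).r c₂.out c₁.out :=
        ⟨Units.mk0 α hα0, Subgroup.mem_top _, Subtype.ext hα⟩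
      rw [← Quotient.out_eq c₁, ← Quotient.out_eq c₂]
      exact (Quotient.sound hrel).symm
  obtain ⟨x, hx⟩ := dot_surj li ![y₁, y₂]
  have hx1 : dot x u₁ = y₁ := by simpa using hx 0
  have hx2 : dot x u₂ = y₂ := by simpa using hx 1
  by_cases hx0 : x = 0
  · have hR : fRow ⟨g * v, by omega⟩ = 0 := by
      simp only [hfRow, Fin.val_mk]
      rw [dif_neg (Nat.lt_irrefl _)]
    refine ⟨⟨g * v, by omega⟩, ?_, ?_⟩
    · show φ (dot (fRow ⟨g * v, by omega⟩) u₁) = a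
      rw [hR, dot_zero, ← hy₁, ← hx1, hx0, dot_zero]
    · show φ (dot (fRow ⟨g * v, by omega⟩) u₂) = b
      rw [hR, dot_zero, ← hy₂, ← hx2, hx0, dot_zero]
  · set cx := Quotient.mk (subRel H {w : Fin n → K // w ≠ 0})
      (⟨x, hx0⟩ : {w : Fin n → K // w ≠ 0}) with hcx
    have hlt : ((eH cx : Fin (g * v)) : ℕ) < g * v := (eH cx).2
    have hR : fRow ⟨((eH cx : Fin (g * v)) : ℕ), by omega⟩
        = ((cx.out : {w : Fin n → K // w ≠ 0}) : Fin n → K) := by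
      simp only [hfRow, Fin.val_mk]
      rw [dif_pos hlt]
      rw [show (⟨((eH cx : Fin (g * v)) : ℕ), hlt⟩ : Fin (g * v)) = eH cx from rfl,
        Equiv.symm_apply_apply]
    obtain ⟨h, hm, hh⟩ : ∃ h' ∈ H, h' • cx.out = (⟨x, hx0⟩ : {w : Fin n → K // w ≠ 0}) :=
      Quotient.exact ((Quotient.out_eq cx).trans hcx)
    have hval : ((h : K)) • ((cx.out : {w : Fin n → K // w ≠ 0}) : Fin n → K) = x := by
      rw [← nz_smul_coe]
      exact congrArg Subtype.val hh
    have key : ∀ u : Fin n → K,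
        φ (dot ((cx.out : {w : Fin n → K // w ≠ 0}) : Fin n → K) u) = φ (dot x u) := by
      intro u
      conv_rhs => rw [← hval, dot_smul, φinv h hm]
    refine ⟨⟨((eH cx : Fin (g * v)) : ℕ), by omega⟩, ?_, ?_⟩
    · show φ (dot (fRow ⟨((eH cx : Fin (g * v)) : ℕ), by omega⟩) u₁) = a
      rw [hR, key, hx1, hy₁]
    · show φ (dot (fRow ⟨((eH cx : Fin (g * v)) : ℕ), by omega⟩) u₂) = b
      rw [hR, key, hx2, hy₂]

end BGWAux

/-- Let `q` be a prime power, `g ∣ q−1` with `g > 0`, and `m > 1`.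
Set `v = (q^{m+1}−1)/(q−1)` and `N = g·v + 1`.  Then there exists a covering array
`CA_{g+1}(N, v, 2, 1)`: an `N × v` array with entries from an alphabet of size `g+1`
such that for all distinct columns `j₁ ≠ j₂` and every ordered pair `(a, b)` of symbols
there is at least one row `r` with entry `a` in column `j₁` and entry `b` in column
`j₂`. -/
theorem covering_array_from_bgw
    (q g m v N : ℕ) (hq : IsPrimePow q) (hg : g ∣ q - 1) (hg0 : 0 < g) (hm : 1 < m)
    (hv : v = (q ^ (m + 1) - 1) / (q - 1)) (hN : N = g * v + 1) :
    ∃ M : Fin N → Fin v → Fin (g + 1),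
      ∀ j₁ j₂ : Fin v, j₁ ≠ j₂ → ∀ a b : Fin (g + 1),
        ∃ r : Fin N, M r j₁ = a ∧ M r j₂ = b := by
  obtain ⟨p, k, hp, hk, hpk⟩ := hq
  haveI : Fact p.Prime := ⟨hp.nat_prime⟩
  haveI : Fintype (GaloisField p k) := Fintype.ofFinite _
  exact BGWAux.main_aux (GaloisField p k) q g m v N
    (by rw [← Nat.card_eq_fintype_card, GaloisField.card p k (by omega)]; exact hpk)
    hg hg0 hm hv hN
end
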